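/- arXiv:2406.15858 — 7 statements merged into one kernel-verified Lean document; each statement's English description precedes it below -/
import Mathlib

section
/- Let λ and β be positive random variables on a probability space (Ω, 𝓕, ℙ) satisfying 𝔼[(β/λ^{1/β}) ((β+1)/β)^{(β+1)/β}] < ∞, and let F(t) = 𝔼[1 − exp(−λ (t/(1−t))^β)] for t ∈ (0,1). Then for every t ∈ (0,1) the random variable h(t; λ, β) is integrable and F is differentiable at t with derivative F′(t) = 𝔼[h(t; λ, β)]; moreover 1 − F(t) = 𝔼[exp(−λ (t/(1−t))^β)]. -/
/-!
With `u = x / (1 - x)`, `z = λ u^β` and `p = (β + 1) / β`, the Kies density factors as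
`h(x; λ, β) = x⁻² · β λ^(-1/β) · z^p e^(-z)`, and `z^p e^(-z) ≤ p^p`. Hence on a neighbourhood
`(t/2, 1)` of `t` the density is dominated by `(t/2)⁻²` times the integrand of the moment
condition, and differentiation under the expectation (dominated convergence) gives
`F' = 𝔼[h]`. The survival identity is linearity of the expectation.
-/

open MeasureTheory Filter Set Topology

namespace Real

theorem rpow_mul_exp_neg_le_rpow_self {z p : ℝ} (hz : 0 ≤ z) (hp : 0 < p) :
    z ^ p * exp (-z) ≤ p ^ p := by
  -- rescaling by `p` reduces this to `y e^(-y) ≤ e^(-1)`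
  have hscale : z ^ p * exp (-z) = p ^ p * (z / p * exp (-(z / p))) ^ p := by
    rw [mul_rpow (div_nonneg hz hp.le) (exp_pos _).le, div_rpow hz hp.le, ← exp_mul,
      neg_mul, div_mul_cancel₀ _ hp.ne']
    field_simp
  have hmax : (z / p * exp (-(z / p))) ^ p ≤ 1 :=
    calc (z / p * exp (-(z / p))) ^ p ≤ exp (-1) ^ p :=
          rpow_le_rpow (by positivity) (mul_exp_neg_le_exp_neg_one _) hp.le
      _ ≤ 1 := rpow_le_one (exp_pos _).le (exp_le_one_iff.2 (by norm_num)) hp.le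
  rw [hscale]
  exact mul_le_of_le_one_right (rpow_pos_of_pos hp p).le hmax

end Real

noncomputable section

def kiesSurvival (l b t : ℝ) : ℝ := Real.exp (-l * (t / (1 - t)) ^ b)

def kiesCDF (l b t : ℝ) : ℝ := 1 - kiesSurvival l b t

def kiesDensity (l b t : ℝ) : ℝ :=
  l * b * t ^ (b - 1) * (1 - t) ^ (-(b + 1)) * kiesSurvival l b t

def kiesDensityBound (l b : ℝ) : ℝ := b / l ^ (1 / b) * ((b + 1) / b) ^ ((b + 1) / b)

end

open Real

theorem hasDerivAt_kiesSurvival (l b : ℝ) {x : ℝ} (hx0 : 0 < x) (hx1 : x < 1) :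
    HasDerivAt (kiesSurvival l b) (-kiesDensity l b x) x := by
  have h1x : 0 < 1 - x := by linarith
  have hodds : HasDerivAt (fun s : ℝ => s / (1 - s)) ((1 - x) ^ 2)⁻¹ x := by
    refine ((hasDerivAt_id x).div ((hasDerivAt_id x).const_sub 1) h1x.ne').congr_deriv ?_
    simp only [id]
    ring
  refine ((hodds.rpow_const (p := b) (Or.inl (div_pos hx0 h1x).ne')).const_mul (-l)).exp
    |>.congr_deriv ?_
  have hsplit : (1 - x) ^ (-(b + 1)) = ((1 - x) ^ (b - 1) * (1 - x) ^ 2)⁻¹ := by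
    rw [rpow_neg h1x.le, show b + 1 = (b - 1) + 2 by ring, rpow_add h1x, rpow_two]
  have hne : (1 - x) ^ (b - 1) ≠ 0 := (rpow_pos_of_pos h1x _).ne'
  unfold kiesDensity kiesSurvival
  rw [div_rpow hx0.le h1x.le (b - 1), hsplit]
  field_simp

theorem hasDerivAt_kiesCDF (l b : ℝ) {x : ℝ} (hx0 : 0 < x) (hx1 : x < 1) :
    HasDerivAt (kiesCDF l b) (kiesDensity l b x) x := by
  have h := (hasDerivAt_kiesSurvival l b hx0 hx1).const_sub 1
  rw [neg_neg] at h
  exact h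

section Bounds

variable {l b x : ℝ}

theorem kiesDensity_eq_inv_sq_mul (hl : 0 < l) (hb : 0 < b) (hx0 : 0 < x) (hx1 : x < 1) :
    kiesDensity l b x = x⁻¹ ^ 2 * (b / l ^ (1 / b)) *
      ((l * (x / (1 - x)) ^ b) ^ ((b + 1) / b) * exp (-(l * (x / (1 - x)) ^ b))) := by
  have h1x : 0 < 1 - x := by linarith
  have hu : 0 < x / (1 - x) := div_pos hx0 h1x
  have hz : (l * (x / (1 - x)) ^ b) ^ ((b + 1) / b) =
      l * l ^ (1 / b) * (x / (1 - x)) ^ (b + 1) := by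
    rw [mul_rpow hl.le (rpow_pos_of_pos hu b).le, ← rpow_mul hu.le, mul_div_cancel₀ _ hb.ne',
      add_div, div_self hb.ne', rpow_add hl, rpow_one]
  have hxb : x ^ (b - 1) = x ^ (b + 1) * x⁻¹ ^ 2 := by
    rw [show b + 1 = (b - 1) + 2 by ring, rpow_add hx0, rpow_two]
    field_simp
  have hne₁ : (1 - x) ^ (b + 1) ≠ 0 := (rpow_pos_of_pos h1x _).ne'
  have hne₂ : l ^ (1 / b) ≠ 0 := (rpow_pos_of_pos hl _).ne'
  unfold kiesDensity kiesSurvival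
  rw [hz, div_rpow hx0.le h1x.le (b + 1), neg_mul, hxb, rpow_neg h1x.le]
  field_simp

theorem kiesDensity_le (hl : 0 < l) (hb : 0 < b) (hx0 : 0 < x) (hx1 : x < 1) :
    kiesDensity l b x ≤ x⁻¹ ^ 2 * kiesDensityBound l b := by
  have hz : 0 ≤ l * (x / (1 - x)) ^ b :=
    mul_nonneg hl.le (rpow_nonneg (div_nonneg hx0.le (by linarith)) b)
  rw [kiesDensity_eq_inv_sq_mul hl hb hx0 hx1, kiesDensityBound, mul_assoc]
  gcongr
  exact rpow_mul_exp_neg_le_rpow_self hz (by positivity)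

theorem kiesDensity_nonneg (hl : 0 ≤ l) (hb : 0 ≤ b) (hx0 : 0 ≤ x) (hx1 : x ≤ 1) :
    0 ≤ kiesDensity l b x := by
  have hpow₁ := rpow_nonneg hx0 (b - 1)
  have hpow₂ := rpow_nonneg (sub_nonneg.2 hx1) (-(b + 1))
  unfold kiesDensity kiesSurvival
  positivity

theorem kiesDensityBound_nonneg (hl : 0 < l) (hb : 0 < b) : 0 ≤ kiesDensityBound l b := by
  have hpow := rpow_pos_of_pos hl (1 / b)
  unfold kiesDensityBound
  positivity

theorem norm_kiesDensity_le {a : ℝ} (hl : 0 < l) (hb : 0 < b) (ha : 0 < a) (hax : a ≤ x)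
    (hx1 : x < 1) : ‖kiesDensity l b x‖ ≤ a⁻¹ ^ 2 * kiesDensityBound l b := by
  have hx0 : 0 < x := ha.trans_le hax
  rw [Real.norm_of_nonneg (kiesDensity_nonneg hl.le hb.le hx0.le hx1.le)]
  calc kiesDensity l b x ≤ x⁻¹ ^ 2 * kiesDensityBound l b := kiesDensity_le hl hb hx0 hx1
    _ ≤ a⁻¹ ^ 2 * kiesDensityBound l b := by
      have := kiesDensityBound_nonneg hl hb
      gcongr

theorem kiesSurvival_le_one (hl : 0 ≤ l) (hx0 : 0 ≤ x) (hx1 : x ≤ 1) :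
    kiesSurvival l b x ≤ 1 := by
  have hpow := rpow_nonneg (div_nonneg hx0 (sub_nonneg.2 hx1)) b
  exact exp_le_one_iff.2 (by nlinarith)

end Bounds

section Mixture

variable {Ω : Type*} [MeasurableSpace Ω] {μ : Measure Ω} [IsFiniteMeasure μ] {lam beta : Ω → ℝ}

theorem integrable_kiesSurvival (hlam : Measurable lam) (hbeta : Measurable beta)
    (hlam_nonneg : ∀ ω, 0 ≤ lam ω) {x : ℝ} (hx0 : 0 ≤ x) (hx1 : x ≤ 1) :
    Integrable (fun ω => kiesSurvival (lam ω) (beta ω) x) μ := by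
  refine Integrable.of_bound (by unfold kiesSurvival; fun_prop) 1 (ae_of_all _ fun ω => ?_)
  have hpos : 0 < kiesSurvival (lam ω) (beta ω) x := exp_pos _
  rw [Real.norm_of_nonneg hpos.le]
  exact kiesSurvival_le_one (hlam_nonneg ω) hx0 hx1

theorem hasDerivAt_integral_kiesCDF (hlam : Measurable lam) (hbeta : Measurable beta)
    (hlam_pos : ∀ ω, 0 < lam ω) (hbeta_pos : ∀ ω, 0 < beta ω)
    (hbound : Integrable (fun ω => kiesDensityBound (lam ω) (beta ω)) μ) {t : ℝ}
    (ht0 : 0 < t) (ht1 : t < 1) :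
    Integrable (fun ω => kiesDensity (lam ω) (beta ω) t) μ ∧
      HasDerivAt (fun x => ∫ ω, kiesCDF (lam ω) (beta ω) x ∂μ)
        (∫ ω, kiesDensity (lam ω) (beta ω) t ∂μ) t :=
  hasDerivAt_integral_of_dominated_loc_of_deriv_le
    (bound := fun ω => (t / 2)⁻¹ ^ 2 * kiesDensityBound (lam ω) (beta ω))
    (Ioo_mem_nhds (half_lt_self ht0) ht1)
    (Eventually.of_forall fun x => by unfold kiesCDF kiesSurvival; fun_prop)
    ((integrable_const 1).sub
      (integrable_kiesSurvival hlam hbeta (fun ω => (hlam_pos ω).le) ht0.le ht1.le))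
    (by unfold kiesDensity kiesSurvival; fun_prop)
    (ae_of_all _ fun ω _ hx =>
      norm_kiesDensity_le (hlam_pos ω) (hbeta_pos ω) (half_pos ht0) hx.1.le hx.2)
    (hbound.const_mul _)
    (ae_of_all _ fun _ _ hx => hasDerivAt_kiesCDF _ _ ((half_pos ht0).trans hx.1) hx.2)

end Mixture

theorem mixed_kies_density
    {Ω : Type*} [MeasurableSpace Ω] (μ : Measure Ω) [IsProbabilityMeasure μ]
    (lam beta : Ω → ℝ) (hlam_meas : Measurable lam) (hbeta_meas : Measurable beta)
    (hlam_pos : ∀ ω, 0 < lam ω) (hbeta_pos : ∀ ω, 0 < beta ω)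
    (hcond : Integrable (fun ω =>
        beta ω / lam ω ^ (1 / beta ω) *
          ((beta ω + 1) / beta ω) ^ ((beta ω + 1) / beta ω)) μ)
    (F : ℝ → ℝ)
    (hF : ∀ t, F t = ∫ ω, (1 - Real.exp (-(lam ω) * (t / (1 - t)) ^ (beta ω))) ∂μ)
    (t : ℝ) (ht : t ∈ Set.Ioo (0 : ℝ) 1) :
    Integrable (fun ω => lam ω * beta ω * t ^ (beta ω - 1) * (1 - t) ^ (-(beta ω + 1)) *
        Real.exp (-(lam ω) * (t / (1 - t)) ^ (beta ω))) μ ∧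
    HasDerivAt F (∫ ω, lam ω * beta ω * t ^ (beta ω - 1) * (1 - t) ^ (-(beta ω + 1)) *
        Real.exp (-(lam ω) * (t / (1 - t)) ^ (beta ω)) ∂μ) t ∧
    1 - F t = ∫ ω, Real.exp (-(lam ω) * (t / (1 - t)) ^ (beta ω)) ∂μ := by
  obtain ⟨ht0, ht1⟩ := ht
  have hF' : ∀ x, F x = ∫ ω, kiesCDF (lam ω) (beta ω) x ∂μ := hF
  obtain ⟨hint, hderiv⟩ :=
    hasDerivAt_integral_kiesCDF hlam_meas hbeta_meas hlam_pos hbeta_pos hcond ht0 ht1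
  refine ⟨hint, funext hF' ▸ hderiv, ?_⟩
  have hsurv := integrable_kiesSurvival (μ := μ) hlam_meas hbeta_meas
    (fun ω => (hlam_pos ω).le) ht0.le ht1.le
  rw [hF' t]
  unfold kiesCDF
  rw [integral_sub (integrable_const 1) hsurv, integral_const, probReal_univ, one_smul,
    sub_sub_cancel]
  rfl
end

section
/- Let λ and β be positive random variables on a probability space (Ω, 𝓕, ℙ) satisfying 𝔼[(β/λ^{1/β}) ((β+1)/β)^{(β+1)/β}] < ∞, 𝔼[λ] < ∞ and 𝔼[λβ] < ∞. If ℙ(β > 1) = 1, then the mixed Kies density f(t) = 𝔼[h(t; λ, β)] tends to 0 as t → 0+. -/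
open MeasureTheory Filter Set

theorem mixed_kies_density_left_endpoint_beta_gt_one
    {Ω : Type*} [MeasurableSpace Ω] (μ : Measure Ω) [IsProbabilityMeasure μ]
    (lam beta : Ω → ℝ) (hlam_meas : Measurable lam) (hbeta_meas : Measurable beta)
    (hlam_pos : ∀ ω, 0 < lam ω) (hbeta_pos : ∀ ω, 0 < beta ω)
    (hcond1 : Integrable (fun ω =>
        beta ω / lam ω ^ (1 / beta ω) *
          ((beta ω + 1) / beta ω) ^ ((beta ω + 1) / beta ω)) μ)
    (hcond2 : Integrable lam μ)
    (hcond3 : Integrable (fun ω => lam ω * beta ω) μ)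
    (hbeta_gt : μ {ω | 1 < beta ω} = 1)
    (f : ℝ → ℝ)
    (hf : ∀ t, f t = ∫ ω, lam ω * beta ω * t ^ (beta ω - 1) * (1 - t) ^ (-(beta ω + 1)) *
        Real.exp (-(lam ω) * (t / (1 - t)) ^ (beta ω)) ∂μ) :
    Tendsto f (nhdsWithin 0 (Set.Ioi 0)) (nhds 0) := by
  have hae : ∀ᵐ ω ∂μ, 1 < beta ω := by
    have hs : MeasurableSet {ω | 1 < beta ω} := measurableSet_lt measurable_const hbeta_meas
    rw [ae_iff]
    have he : {ω | ¬ 1 < beta ω} = {ω | 1 < beta ω}ᶜ := rfl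
    rw [he, measure_compl hs (measure_ne_top μ _), hbeta_gt, measure_univ]
    simp
  set F : ℝ → Ω → ℝ := fun t ω => lam ω * beta ω * t ^ (beta ω - 1) * (1 - t) ^ (-(beta ω + 1)) *
      Real.exp (-(lam ω) * (t / (1 - t)) ^ (beta ω)) with hF
  have hIoc : Set.Ioc (0:ℝ) (1/2) ∈ nhdsWithin (0:ℝ) (Set.Ioi 0) :=
    Ioc_mem_nhdsGT_of_mem (by norm_num : (0:ℝ) ∈ Set.Ico (0:ℝ) (1/2))
  have hmeas : ∀ᶠ t in nhdsWithin (0:ℝ) (Set.Ioi 0), AEStronglyMeasurable (F t) μ := by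
    filter_upwards [hIoc] with t ht
    obtain ⟨ht0, ht2⟩ := ht
    have h1t : (0:ℝ) < 1 - t := by linarith
    apply Measurable.aestronglyMeasurable
    have e : F t = fun ω => lam ω * beta ω * Real.exp (Real.log t * (beta ω - 1)) *
        Real.exp (Real.log (1 - t) * (-(beta ω + 1))) *
        Real.exp (-(lam ω) * Real.exp (Real.log (t / (1 - t)) * beta ω)) := by
      funext ω
      rw [hF]
      dsimp only
      rw [Real.rpow_def_of_pos ht0, Real.rpow_def_of_pos h1t,
        Real.rpow_def_of_pos (div_pos ht0 h1t)]
    rw [e]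
    fun_prop
  have hbound : ∀ᶠ t in nhdsWithin (0:ℝ) (Set.Ioi 0), ∀ᵐ ω ∂μ,
      ‖F t ω‖ ≤ 4 * (lam ω * beta ω) := by
    filter_upwards [hIoc] with t ht
    filter_upwards [hae] with ω hb
    obtain ⟨ht0, ht2⟩ := ht
    have h1t : (0:ℝ) < 1 - t := by linarith
    have hx0 : (0:ℝ) < t / (1 - t) := div_pos ht0 h1t
    have hx1 : t / (1 - t) ≤ 1 := (div_le_one h1t).mpr (by linarith)
    have key : (t / (1 - t)) ^ (beta ω - 1) * (1 - t) ^ (-(2:ℝ))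
        = t ^ (beta ω - 1) * (1 - t) ^ (-(beta ω + 1)) := by
      rw [Real.div_rpow ht0.le h1t.le, div_eq_mul_inv, ← Real.rpow_neg h1t.le,
        mul_assoc, ← Real.rpow_add h1t]
      congr 1
      congr 1
      ring
    have hA : (0:ℝ) ≤ lam ω * beta ω := mul_nonneg (hlam_pos ω).le (hbeta_pos ω).le
    have hnonneg : (0:ℝ) ≤ F t ω := by
      rw [hF]
      exact mul_nonneg (mul_nonneg (mul_nonneg hA (Real.rpow_nonneg ht0.le _))
        (Real.rpow_nonneg h1t.le _)) (Real.exp_pos _).le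
    rw [Real.norm_eq_abs, abs_of_nonneg hnonneg]
    have e1 : F t ω = lam ω * beta ω * ((t / (1 - t)) ^ (beta ω - 1)) * ((1 - t) ^ (-(2:ℝ))) *
        Real.exp (-(lam ω) * (t / (1 - t)) ^ (beta ω)) := by
      rw [hF]
      dsimp only
      linear_combination (-(lam ω * beta ω * Real.exp (-(lam ω) * (t / (1 - t)) ^ (beta ω)))) * key
    rw [e1]
    have hxle : (t / (1 - t)) ^ (beta ω - 1) ≤ 1 :=
      Real.rpow_le_one hx0.le hx1 (by linarith)
    have h4 : (1 - t) ^ (-(2:ℝ)) ≤ 4 := by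
      have hmono := Real.rpow_le_rpow_of_nonpos (by norm_num : (0:ℝ) < 1/2)
        (by linarith : (1:ℝ)/2 ≤ 1 - t) (by norm_num : -(2:ℝ) ≤ 0)
      have hh : ((1:ℝ)/2) ^ (-(2:ℝ)) = 4 := by
        rw [show (-(2:ℝ)) = ((-2 : ℤ) : ℝ) by norm_num, Real.rpow_intCast]
        norm_num
      linarith
    have hexp : Real.exp (-(lam ω) * (t / (1 - t)) ^ (beta ω)) ≤ 1 := by
      rw [Real.exp_le_one_iff]
      have h0 : (0:ℝ) ≤ (t / (1 - t)) ^ (beta ω) := Real.rpow_nonneg hx0.le _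
      nlinarith [hlam_pos ω]
    have hY : (0:ℝ) ≤ (1 - t) ^ (-(2:ℝ)) := Real.rpow_nonneg h1t.le _
    have hE : (0:ℝ) ≤ Real.exp (-(lam ω) * (t / (1 - t)) ^ (beta ω)) := (Real.exp_pos _).le
    calc lam ω * beta ω * ((t / (1 - t)) ^ (beta ω - 1)) * ((1 - t) ^ (-(2:ℝ))) *
        Real.exp (-(lam ω) * (t / (1 - t)) ^ (beta ω))
        ≤ lam ω * beta ω * 1 * ((1 - t) ^ (-(2:ℝ))) *
          Real.exp (-(lam ω) * (t / (1 - t)) ^ (beta ω)) :=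
          mul_le_mul_of_nonneg_right
            (mul_le_mul_of_nonneg_right (mul_le_mul_of_nonneg_left hxle hA) hY) hE
      _ ≤ lam ω * beta ω * 1 * 4 * Real.exp (-(lam ω) * (t / (1 - t)) ^ (beta ω)) :=
          mul_le_mul_of_nonneg_right (mul_le_mul_of_nonneg_left h4 (by linarith)) hE
      _ ≤ lam ω * beta ω * 1 * 4 * 1 :=
          mul_le_mul_of_nonneg_left hexp (by linarith)
      _ = 4 * (lam ω * beta ω) := by ring
  have hbint : Integrable (fun ω => 4 * (lam ω * beta ω)) μ := hcond3.const_mul 4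
  have hlim : ∀ᵐ ω ∂μ, Tendsto (fun t => F t ω) (nhdsWithin (0:ℝ) (Set.Ioi 0)) (nhds 0) := by
    filter_upwards [hae] with ω hb
    have h1 : Tendsto (fun t : ℝ => t ^ (beta ω - 1)) (nhdsWithin (0:ℝ) (Set.Ioi 0)) (nhds 0) := by
      have hc := (Real.continuousAt_rpow_const 0 (beta ω - 1) (Or.inr (by linarith))).tendsto
      have hm := hc.mono_left (nhdsWithin_le_nhds (s := Set.Ioi (0:ℝ)))
      simpa [Real.zero_rpow (by linarith : beta ω - 1 ≠ 0)] using hm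
    have h2 : Tendsto (fun t : ℝ => (1 - t) ^ (-(beta ω + 1))) (nhds (0:ℝ)) (nhds 1) := by
      have hc : ContinuousAt (fun t : ℝ => (1 - t) ^ (-(beta ω + 1))) 0 := by
        apply ContinuousAt.rpow_const (by fun_prop)
        left; norm_num
      simpa using hc.tendsto
    have h3 : Tendsto (fun t : ℝ => Real.exp (-(lam ω) * (t / (1 - t)) ^ (beta ω)))
        (nhds (0:ℝ)) (nhds 1) := by
      have hdiv : ContinuousAt (fun t : ℝ => t / (1 - t)) 0 :=
        ContinuousAt.div continuousAt_id (by fun_prop) (by norm_num)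
      have hc : ContinuousAt (fun t : ℝ => -(lam ω) * (t / (1 - t)) ^ (beta ω)) 0 :=
        continuousAt_const.mul (hdiv.rpow_const (Or.inr (hbeta_pos ω).le))
      have hcomp := Real.continuous_exp.continuousAt.comp hc
      simpa [Function.comp_def, Real.zero_rpow (hbeta_pos ω).ne'] using hcomp.tendsto
    have hc0 : Tendsto (fun _ : ℝ => lam ω * beta ω) (nhdsWithin (0:ℝ) (Set.Ioi 0))
        (nhds (lam ω * beta ω)) := tendsto_const_nhds
    have hprod := ((hc0.mul h1).mul (h2.mono_left nhdsWithin_le_nhds)).mul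
      (h3.mono_left nhdsWithin_le_nhds)
    simpa [hF] using hprod
  have hdct := tendsto_integral_filter_of_dominated_convergence (μ := μ)
    (bound := fun ω => 4 * (lam ω * beta ω))
    hmeas hbound hbint hlim
  have hfe : f = fun t => ∫ ω, F t ω ∂μ := funext hf
  rw [hfe]
  simpa using hdct
end

section
/- Let λ and β be positive random variables on a probability space (Ω, 𝓕, ℙ), and let F(t) = 𝔼[1 − exp(−λ (t/(1−t))^β)] for t ∈ (0,1). Suppose τ is a positive random variable on the same space such that λ = τ (1/𝔼[e^{−τ}] − 1)^β almost surely. Then 0 < 𝔼[e^{−τ}] < 1 and d := 𝔼[e^{−τ}] satisfies F(d) + d = 1, i.e. d is the Hausdorff saturation of the mixed Kies distribution. -/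
open MeasureTheory Filter Set

theorem mixed_kies_saturation_via_tau
    {Ω : Type*} [MeasurableSpace Ω] (μ : Measure Ω) [IsProbabilityMeasure μ]
    (lam beta : Ω → ℝ) (hlam_meas : Measurable lam) (hbeta_meas : Measurable beta)
    (hlam_pos : ∀ ω, 0 < lam ω) (hbeta_pos : ∀ ω, 0 < beta ω)
    (F : ℝ → ℝ)
    (hF : ∀ t, F t = ∫ ω, (1 - Real.exp (-(lam ω) * (t / (1 - t)) ^ (beta ω))) ∂μ)
    (tau : Ω → ℝ) (htau_meas : Measurable tau) (htau_pos : ∀ ω, 0 < tau ω)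
    (hrel : ∀ᵐ ω ∂μ, lam ω =
        tau ω * (1 / (∫ ω', Real.exp (-tau ω') ∂μ) - 1) ^ (beta ω)) :
    (0 < ∫ ω, Real.exp (-tau ω) ∂μ) ∧ (∫ ω, Real.exp (-tau ω) ∂μ) < 1 ∧
      F (∫ ω, Real.exp (-tau ω) ∂μ) + (∫ ω, Real.exp (-tau ω) ∂μ) = 1 := by
  set d : ℝ := ∫ ω, Real.exp (-tau ω) ∂μ with hd
  have hmeas : Measurable fun ω => Real.exp (-tau ω) := (htau_meas.neg).exp
  have hint : Integrable (fun ω => Real.exp (-tau ω)) μ := by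
    refine (integrable_const (1 : ℝ)).mono' hmeas.aestronglyMeasurable ?_
    filter_upwards with ω
    rw [Real.norm_eq_abs, abs_of_pos (Real.exp_pos _)]
    exact (Real.exp_le_one_iff).2 (by linarith [htau_pos ω])
  have hdpos : 0 < d := by
    rw [hd, integral_pos_iff_support_of_nonneg_ae
      (Filter.Eventually.of_forall fun ω => (Real.exp_pos _).le) hint]
    have : (Function.support fun ω => Real.exp (-tau ω)) = Set.univ := by
      ext ω; simp [Function.support, (Real.exp_pos (-tau ω)).ne']
    rw [this]; simp
  have hcompl : Integrable (fun ω => 1 - Real.exp (-tau ω)) μ :=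
    (integrable_const 1).sub hint
  have hcint : (∫ ω, (1 - Real.exp (-tau ω)) ∂μ) = 1 - d := by
    rw [integral_sub (integrable_const 1) hint, integral_const]
    simp [hd]
  have hcpos : 0 < ∫ ω, (1 - Real.exp (-tau ω)) ∂μ := by
    rw [integral_pos_iff_support_of_nonneg_ae
      (Filter.Eventually.of_forall fun ω => by
        show (0:ℝ) ≤ 1 - Real.exp (-tau ω)
        have := Real.exp_lt_one_iff.2 (by linarith [htau_pos ω] : -tau ω < 0)
        linarith) hcompl]
    have : (Function.support fun ω => 1 - Real.exp (-tau ω)) = Set.univ := by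
      ext ω
      have := Real.exp_lt_one_iff.2 (by linarith [htau_pos ω] : -tau ω < 0)
      simp only [Function.mem_support, Set.mem_univ, iff_true]
      intro h; linarith
    rw [this]; simp
  have hdlt : d < 1 := by rw [hcint] at hcpos; linarith
  refine ⟨hdpos, hdlt, ?_⟩
  have hdne : d ≠ 0 := hdpos.ne'
  have h1dne : (1:ℝ) - d ≠ 0 := by linarith
  have key : F d = 1 - d := by
    rw [hF d]
    have heq : (∫ ω, (1 - Real.exp (-(lam ω) * (d / (1 - d)) ^ (beta ω))) ∂μ)
        = ∫ ω, (1 - Real.exp (-tau ω)) ∂μ := by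
      apply integral_congr_ae
      filter_upwards [hrel] with ω hω
      rw [hω]
      have h1 : 1 / d - 1 = (1 - d) / d := by field_simp
      have h2 : (0:ℝ) ≤ (1 - d) / d := div_nonneg (by linarith) hdpos.le
      have h3 : (0:ℝ) ≤ d / (1 - d) := div_nonneg hdpos.le (by linarith)
      have h4 : -(tau ω * ((1 : ℝ) / d - 1) ^ beta ω) * (d / (1 - d)) ^ beta ω
          = -tau ω := by
        rw [h1, neg_mul, mul_assoc, ← Real.mul_rpow h2 h3]
        have h5 : (1 - d) / d * (d / (1 - d)) = 1 := by
          field_simp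
        rw [h5, Real.one_rpow, mul_one]
      rw [h4]
    rw [heq, hcint]
  rw [key]; ring
end

section
/- Let λ and β be positive random variables on a probability space (Ω, 𝓕, ℙ). Then there exists a positive random variable τ satisfying λ = τ (1/𝔼[e^{−τ}] − 1)^β almost surely, and such τ is unique (any two positive random variables satisfying this relation coincide almost surely). Explicitly, τ = λ x̄^β, where x̄ is the unique positive solution of the equation x (1/𝔼[e^{−λ x^β}] − 1) = 1. -/
/-!
Write `L x = 𝔼[exp (-λ x^β)]` and `γ x = x (1 / L x - 1)`. On `(0, ∞)` the function `L` is
continuous, strictly decreasing, with values in `(0, 1)` and limit `0` at infinity, so `γ` is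
continuous and strictly increasing, small near `0` and unbounded; hence `γ x = 1` has exactly one
positive root `x̄`. Conversely, if `λ = τ c^β` a.e. with `c = 1 / 𝔼[exp (-τ)] - 1 > 0`, then
`τ = λ (1/c)^β` a.e., so `L (1/c) = 𝔼[exp (-τ)]` and `γ (1/c) = 1`; thus `1/c = x̄` and
`τ = λ x̄^β` a.e.
-/

open MeasureTheory Filter Set Topology

lemma mul_rpow_mul_rpow_eq_self {a x c : ℝ} (b : ℝ) (hx : 0 ≤ x) (hc : 0 ≤ c) (h : x * c = 1) :
    a * x ^ b * c ^ b = a := by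
  rw [mul_assoc, ← Real.mul_rpow hx hc, h, Real.one_rpow, mul_one]

lemma norm_exp_neg_le_one {t : ℝ} (ht : 0 ≤ t) : ‖Real.exp (-t)‖ ≤ 1 := by
  rw [Real.norm_eq_abs, Real.abs_exp, Real.exp_le_one_iff]
  linarith

namespace MeasureTheory

variable {α : Type*} [MeasurableSpace α] {μ : Measure α}

lemma integral_lt_integral_of_forall_lt [NeZero μ] {f g : α → ℝ} (hf : Integrable f μ)
    (hg : Integrable g μ) (hfg : ∀ a, f a < g a) : ∫ a, f a ∂μ < ∫ a, g a ∂μ := by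
  have hsupp : Function.support (fun a => g a - f a) = univ :=
    eq_univ_of_forall fun a => sub_ne_zero.mpr (hfg a).ne'
  have hpos : 0 < ∫ a, (g a - f a) ∂μ := by
    rw [integral_pos_iff_support_of_nonneg (fun a => sub_nonneg.mpr (hfg a).le) (hg.sub hf),
      hsupp, pos_iff_ne_zero, Measure.measure_univ_ne_zero]
    exact NeZero.ne μ
  rwa [integral_sub hg hf, sub_pos] at hpos

lemma integrable_exp_neg [IsFiniteMeasure μ] {f : α → ℝ} (hf : Measurable f)
    (hf_nonneg : ∀ a, 0 ≤ f a) : Integrable (fun a => Real.exp (-f a)) μ :=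
  (integrable_const (1 : ℝ)).mono' hf.neg.exp.aestronglyMeasurable
    (ae_of_all _ fun a => norm_exp_neg_le_one (hf_nonneg a))

lemma integral_exp_neg_lt_one [IsProbabilityMeasure μ] {f : α → ℝ} (hf : Measurable f)
    (hf_pos : ∀ a, 0 < f a) : ∫ a, Real.exp (-f a) ∂μ < 1 := by
  have hlt := integral_lt_integral_of_forall_lt (μ := μ)
    (integrable_exp_neg hf fun a => (hf_pos a).le) (integrable_const (1 : ℝ))
    fun a => Real.exp_lt_one_iff.mpr (neg_lt_zero.mpr (hf_pos a))
  simpa using hlt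

lemma one_div_integral_exp_neg_sub_one_pos [IsProbabilityMeasure μ] {f : α → ℝ}
    (hf : Measurable f) (hf_pos : ∀ a, 0 < f a) : 0 < 1 / ∫ a, Real.exp (-f a) ∂μ - 1 := by
  have hpos := integral_exp_pos (μ := μ) (integrable_exp_neg hf fun a => (hf_pos a).le)
  rw [sub_pos, one_lt_div hpos]
  exact integral_exp_neg_lt_one hf hf_pos

end MeasureTheory

section MixedKies

variable {Ω : Type*} {lam beta : Ω → ℝ}

lemma mul_rpow_pos (hlam_pos : ∀ ω, 0 < lam ω) {x : ℝ} (hx : 0 < x) (ω : Ω) :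
    0 < lam ω * x ^ beta ω :=
  mul_pos (hlam_pos ω) (Real.rpow_pos_of_pos hx _)

variable [MeasurableSpace Ω] {μ : Measure Ω}

noncomputable def mixedKiesLaplace (μ : Measure Ω) (lam beta : Ω → ℝ) (x : ℝ) : ℝ :=
  ∫ ω, Real.exp (-(lam ω * x ^ beta ω)) ∂μ

noncomputable def mixedKiesGamma (μ : Measure Ω) (lam beta : Ω → ℝ) (x : ℝ) : ℝ :=
  x * (1 / mixedKiesLaplace μ lam beta x - 1)

lemma measurable_mul_rpow (hlam : Measurable lam) (hbeta : Measurable beta) (x : ℝ) :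
    Measurable fun ω => lam ω * x ^ beta ω :=
  hlam.mul (measurable_const.pow hbeta)

lemma continuousOn_mixedKiesLaplace [IsFiniteMeasure μ] (hlam : Measurable lam)
    (hbeta : Measurable beta) (hlam_nonneg : ∀ ω, 0 ≤ lam ω) :
    ContinuousOn (mixedKiesLaplace μ lam beta) (Ioi 0) := by
  intro x hx
  refine (continuousAt_of_dominated
    (Eventually.of_forall fun y => (measurable_mul_rpow hlam hbeta y).neg.exp.aestronglyMeasurable)
    ?_ (integrable_const 1) (ae_of_all _ fun ω => ?_)).continuousWithinAt
  · filter_upwards [eventually_gt_nhds hx] with y hy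
    exact ae_of_all _ fun ω =>
      norm_exp_neg_le_one (mul_nonneg (hlam_nonneg ω) (Real.rpow_nonneg hy.le _))
  · exact (continuousAt_const.mul
      (Real.continuousAt_rpow_const x _ (Or.inl (ne_of_gt hx)))).neg.rexp

lemma tendsto_mixedKiesLaplace_atTop [IsFiniteMeasure μ] (hlam : Measurable lam)
    (hbeta : Measurable beta) (hlam_pos : ∀ ω, 0 < lam ω) (hbeta_pos : ∀ ω, 0 < beta ω) :
    Tendsto (mixedKiesLaplace μ lam beta) atTop (𝓝 0) := by
  have hlim := tendsto_integral_filter_of_dominated_convergence (μ := μ) (fun _ => (1 : ℝ))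
    (Eventually.of_forall fun y => (measurable_mul_rpow hlam hbeta y).neg.exp.aestronglyMeasurable)
    ?_ (integrable_const 1) (ae_of_all _ fun ω =>
      Real.tendsto_exp_atBot.comp <| tendsto_neg_atTop_atBot.comp <|
        (tendsto_rpow_atTop (hbeta_pos ω)).const_mul_atTop (hlam_pos ω))
  · rwa [integral_zero] at hlim
  · filter_upwards [eventually_gt_atTop 0] with x hx
    exact ae_of_all _ fun ω => norm_exp_neg_le_one (mul_rpow_pos hlam_pos hx ω).le

variable [IsProbabilityMeasure μ]

lemma mixedKiesLaplace_pos (hlam : Measurable lam) (hbeta : Measurable beta)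
    (hlam_pos : ∀ ω, 0 < lam ω) {x : ℝ} (hx : 0 < x) : 0 < mixedKiesLaplace μ lam beta x :=
  integral_exp_pos (integrable_exp_neg (measurable_mul_rpow hlam hbeta x)
    fun ω => (mul_rpow_pos hlam_pos hx ω).le)

lemma one_div_mixedKiesLaplace_sub_one_pos (hlam : Measurable lam) (hbeta : Measurable beta)
    (hlam_pos : ∀ ω, 0 < lam ω) {x : ℝ} (hx : 0 < x) :
    0 < 1 / mixedKiesLaplace μ lam beta x - 1 :=
  one_div_integral_exp_neg_sub_one_pos (measurable_mul_rpow hlam hbeta x)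
    (mul_rpow_pos hlam_pos hx)

lemma mixedKiesLaplace_strictAntiOn (hlam : Measurable lam) (hbeta : Measurable beta)
    (hlam_pos : ∀ ω, 0 < lam ω) (hbeta_pos : ∀ ω, 0 < beta ω) :
    StrictAntiOn (mixedKiesLaplace μ lam beta) (Ioi 0) := by
  intro x hx y hy hxy
  refine integral_lt_integral_of_forall_lt
    (integrable_exp_neg (measurable_mul_rpow hlam hbeta y)
      fun ω => (mul_rpow_pos hlam_pos hy ω).le)
    (integrable_exp_neg (measurable_mul_rpow hlam hbeta x)
      fun ω => (mul_rpow_pos hlam_pos hx ω).le) fun ω => ?_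
  have hpow := Real.rpow_lt_rpow (le_of_lt hx) hxy (hbeta_pos ω)
  have hlam_ω := hlam_pos ω
  gcongr

lemma mixedKiesGamma_strictMonoOn (hlam : Measurable lam) (hbeta : Measurable beta)
    (hlam_pos : ∀ ω, 0 < lam ω) (hbeta_pos : ∀ ω, 0 < beta ω) :
    StrictMonoOn (mixedKiesGamma μ lam beta) (Ioi 0) := by
  intro x hx y hy hxy
  have hLy := mixedKiesLaplace_pos (μ := μ) hlam hbeta hlam_pos hy
  have hL := mixedKiesLaplace_strictAntiOn (μ := μ) hlam hbeta hlam_pos hbeta_pos hx hy hxy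
  calc x * (1 / mixedKiesLaplace μ lam beta x - 1)
      < x * (1 / mixedKiesLaplace μ lam beta y - 1) := by gcongr
    _ < y * (1 / mixedKiesLaplace μ lam beta y - 1) :=
      mul_lt_mul_of_pos_right hxy (one_div_mixedKiesLaplace_sub_one_pos hlam hbeta hlam_pos hy)

lemma continuousOn_mixedKiesGamma (hlam : Measurable lam) (hbeta : Measurable beta)
    (hlam_pos : ∀ ω, 0 < lam ω) : ContinuousOn (mixedKiesGamma μ lam beta) (Ioi 0) :=
  continuousOn_id.mul <| (continuousOn_const.div
    (continuousOn_mixedKiesLaplace hlam hbeta fun ω => (hlam_pos ω).le)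
    fun _ hx => (mixedKiesLaplace_pos hlam hbeta hlam_pos hx).ne').sub continuousOn_const

lemma exists_mixedKiesGamma_lt_one (hlam : Measurable lam) (hbeta : Measurable beta)
    (hlam_pos : ∀ ω, 0 < lam ω) (hbeta_pos : ∀ ω, 0 < beta ω) :
    ∃ x, 0 < x ∧ mixedKiesGamma μ lam beta x < 1 := by
  set C := 1 / mixedKiesLaplace μ lam beta 1 - 1
  have hC : 0 < C := one_div_mixedKiesLaplace_sub_one_pos hlam hbeta hlam_pos one_pos
  -- for `x < 1` the factor `1 / L x - 1` is at most `C`, so `x = 1 / (C + 2)` works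
  have hx : 0 < 1 / (C + 2) := by positivity
  have hx_lt : 1 / (C + 2) < 1 := by rw [div_lt_one (by positivity)]; linarith
  have hL := mixedKiesLaplace_strictAntiOn (μ := μ) hlam hbeta hlam_pos hbeta_pos hx
    (mem_Ioi.mpr one_pos) hx_lt
  refine ⟨1 / (C + 2), hx, ?_⟩
  calc mixedKiesGamma μ lam beta (1 / (C + 2))
      ≤ 1 / (C + 2) * C := by
        have hL₁ := mixedKiesLaplace_pos (μ := μ) hlam hbeta hlam_pos one_pos
        exact mul_le_mul_of_nonneg_left (sub_le_sub_right (one_div_le_one_div_of_le hL₁ hL.le) 1)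
          hx.le
    _ < 1 := by rw [one_div_mul_eq_div, div_lt_one (by positivity)]; linarith

lemma tendsto_mixedKiesGamma_atTop (hlam : Measurable lam) (hbeta : Measurable beta)
    (hlam_pos : ∀ ω, 0 < lam ω) (hbeta_pos : ∀ ω, 0 < beta ω) :
    Tendsto (mixedKiesGamma μ lam beta) atTop atTop := by
  have hL : Tendsto (mixedKiesLaplace μ lam beta) atTop (𝓝[>] 0) :=
    tendsto_nhdsWithin_iff.mpr ⟨tendsto_mixedKiesLaplace_atTop hlam hbeta hlam_pos hbeta_pos,
      (eventually_gt_atTop 0).mono fun _ hx => mixedKiesLaplace_pos hlam hbeta hlam_pos hx⟩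
  refine tendsto_id.atTop_mul_atTop₀ (tendsto_atTop_add_const_right _ (-1) ?_)
  exact hL.inv_tendsto_nhdsGT_zero.congr fun x => (one_div _).symm

lemma exists_mixedKiesGamma_eq_one (hlam : Measurable lam) (hbeta : Measurable beta)
    (hlam_pos : ∀ ω, 0 < lam ω) (hbeta_pos : ∀ ω, 0 < beta ω) :
    ∃ x, 0 < x ∧ mixedKiesGamma μ lam beta x = 1 := by
  obtain ⟨x₀, hx₀, hγx₀⟩ := exists_mixedKiesGamma_lt_one (μ := μ) hlam hbeta hlam_pos hbeta_pos
  obtain ⟨x₁, hγx₁, hx₀x₁⟩ := (((tendsto_mixedKiesGamma_atTop (μ := μ) hlam hbeta hlam_pos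
    hbeta_pos).eventually_gt_atTop 1).and (eventually_gt_atTop x₀)).exists
  have hcont : ContinuousOn (mixedKiesGamma μ lam beta) (Icc x₀ x₁) :=
    (continuousOn_mixedKiesGamma hlam hbeta hlam_pos).mono fun _ hy => hx₀.trans_le hy.1
  obtain ⟨x, hx, hγx⟩ := intermediate_value_Icc hx₀x₁.le hcont ⟨hγx₀.le, hγx₁.le⟩
  exact ⟨x, hx₀.trans_le hx.1, hγx⟩

lemma exists_mixedKiesGamma_eq_one_of_ae_eq {τ : Ω → ℝ} (hτ : Measurable τ)
    (hτ_pos : ∀ ω, 0 < τ ω)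
    (h : ∀ᵐ ω ∂μ, lam ω = τ ω * (1 / (∫ ω', Real.exp (-τ ω') ∂μ) - 1) ^ (beta ω)) :
    ∃ x, 0 < x ∧ mixedKiesGamma μ lam beta x = 1 ∧ τ =ᵐ[μ] fun ω => lam ω * x ^ beta ω := by
  set c := 1 / (∫ ω', Real.exp (-τ ω') ∂μ) - 1 with hc_def
  have hc : 0 < c := one_div_integral_exp_neg_sub_one_pos hτ hτ_pos
  have hτ_eq : τ =ᵐ[μ] fun ω => lam ω * c⁻¹ ^ beta ω := by
    filter_upwards [h] with ω hω
    rw [hω, mul_rpow_mul_rpow_eq_self _ hc.le (inv_nonneg.mpr hc.le) (mul_inv_cancel₀ hc.ne')]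
  have hL : mixedKiesLaplace μ lam beta c⁻¹ = ∫ ω, Real.exp (-τ ω) ∂μ :=
    integral_congr_ae <| hτ_eq.symm.fun_comp fun t => Real.exp (-t)
  refine ⟨c⁻¹, inv_pos.mpr hc, ?_, hτ_eq⟩
  rw [mixedKiesGamma, hL, ← hc_def, inv_mul_cancel₀ hc.ne']

end MixedKies

theorem mixed_kies_tau_exists_unique
    {Ω : Type*} [MeasurableSpace Ω] (μ : Measure Ω) [IsProbabilityMeasure μ]
    (lam beta : Ω → ℝ) (hlam_meas : Measurable lam) (hbeta_meas : Measurable beta)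
    (hlam_pos : ∀ ω, 0 < lam ω) (hbeta_pos : ∀ ω, 0 < beta ω) :
    (∃ xbar : ℝ, 0 < xbar ∧
        xbar * (1 / (∫ ω, Real.exp (-(lam ω) * xbar ^ (beta ω)) ∂μ) - 1) = 1 ∧
        (∀ y : ℝ, 0 < y →
          y * (1 / (∫ ω, Real.exp (-(lam ω) * y ^ (beta ω)) ∂μ) - 1) = 1 → y = xbar) ∧
        (∀ᵐ ω ∂μ, lam ω =
          (lam ω * xbar ^ (beta ω)) *
            (1 / (∫ ω', Real.exp (-(lam ω' * xbar ^ (beta ω'))) ∂μ) - 1) ^ (beta ω))) ∧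
    (∀ τ₁ τ₂ : Ω → ℝ, Measurable τ₁ → Measurable τ₂ →
        (∀ ω, 0 < τ₁ ω) → (∀ ω, 0 < τ₂ ω) →
        (∀ᵐ ω ∂μ, lam ω = τ₁ ω * (1 / (∫ ω', Real.exp (-τ₁ ω') ∂μ) - 1) ^ (beta ω)) →
        (∀ᵐ ω ∂μ, lam ω = τ₂ ω * (1 / (∫ ω', Real.exp (-τ₂ ω') ∂μ) - 1) ^ (beta ω)) →
        τ₁ =ᵐ[μ] τ₂) := by
  simp only [neg_mul]
  have hinj := (mixedKiesGamma_strictMonoOn (μ := μ) hlam_meas hbeta_meas hlam_pos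
    hbeta_pos).injOn
  obtain ⟨xbar, hxbar, hγ⟩ :=
    exists_mixedKiesGamma_eq_one (μ := μ) hlam_meas hbeta_meas hlam_pos hbeta_pos
  refine ⟨⟨xbar, hxbar, hγ, fun y hy hγy => hinj hy hxbar (hγy.trans hγ.symm),
    ae_of_all _ fun ω => ?_⟩, ?_⟩
  · exact (mul_rpow_mul_rpow_eq_self _ hxbar.le
      (one_div_mixedKiesLaplace_sub_one_pos hlam_meas hbeta_meas hlam_pos hxbar).le hγ).symm
  · intro τ₁ τ₂ hτ₁ hτ₂ hτ₁_pos hτ₂_pos h₁ h₂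
    obtain ⟨y₁, hy₁, hγ₁, hτ₁_eq⟩ := exists_mixedKiesGamma_eq_one_of_ae_eq hτ₁ hτ₁_pos h₁
    obtain ⟨y₂, hy₂, hγ₂, hτ₂_eq⟩ := exists_mixedKiesGamma_eq_one_of_ae_eq hτ₂ hτ₂_pos h₂
    obtain rfl : y₁ = y₂ := hinj hy₁ hy₂ (hγ₁.trans hγ₂.symm)
    exact hτ₁_eq.trans hτ₂_eq.symm
end

section
/- Let θ > 0 and β > 0, and let λ be exponentially distributed with intensity θ (density θ e^{−θ x} on (0, ∞)). Then for every t ∈ (0,1): (i) the exponential Kies mixture has complementary CDF ∫_0^∞ θ e^{−θ x} exp(−x (t/(1−t))^β) dx = θ (1−t)^β / (θ (1−t)^β + t^β), so that F(t) = t^β / (θ (1−t)^β + t^β); and (ii) F is differentiable at t with F′(t) = θ β t^{β−1} (1−t)^{β−1} / (θ (1−t)^β + t^β)². -/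
/-!
Mixing over an exponential rate turns the survival function `exp (-λ c)` of the Kies law,
`c = (t / (1 - t)) ^ β`, into the Laplace transform `θ / (θ + c)` of the exponential density.
Clearing the denominator `(1 - t) ^ β` gives the closed forms, and the derivative is the
quotient rule applied to `t ^ β / (θ (1 - t) ^ β + t ^ β)`.
-/

open MeasureTheory Set Real

theorem exp_density_mul_exp_eq (θ c x : ℝ) :
    θ * exp (-θ * x) * exp (-x * c) = θ * exp (-(θ + c) * x) := by
  rw [mul_assoc, ← exp_add]
  ring_nf

section ExponentialLaplace

variable {θ c : ℝ}

theorem integrableOn_exp_density_mul_exp_Ioi (h : 0 < θ + c) :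
    IntegrableOn (fun x => θ * exp (-θ * x) * exp (-x * c)) (Ioi 0) := by
  simp_rw [exp_density_mul_exp_eq]
  exact (integrableOn_exp_mul_Ioi (by linarith) 0).const_mul θ

theorem integral_exp_density_mul_exp_Ioi (h : 0 < θ + c) :
    ∫ x in Ioi (0 : ℝ), θ * exp (-θ * x) * exp (-x * c) = θ / (θ + c) := by
  simp_rw [exp_density_mul_exp_eq]
  rw [integral_const_mul, integral_exp_mul_Ioi (by linarith) 0, mul_zero, exp_zero,
    neg_div_neg_eq, mul_one_div]

theorem integral_exp_density_mul_one_sub_exp_Ioi (hθ : 0 < θ) (h : 0 < θ + c) :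
    ∫ x in Ioi (0 : ℝ), θ * exp (-θ * x) * (1 - exp (-x * c)) = c / (θ + c) := by
  have hsplit : ∀ x, θ * exp (-θ * x) * (1 - exp (-x * c))
      = θ * exp (-θ * x) * exp (-x * 0) - θ * exp (-θ * x) * exp (-x * c) := by
    intro x
    simp only [mul_zero, exp_zero]
    ring
  have hθ' : 0 < θ + 0 := by simpa using hθ
  simp_rw [hsplit]
  rw [integral_sub (integrableOn_exp_density_mul_exp_Ioi hθ')
    (integrableOn_exp_density_mul_exp_Ioi h), integral_exp_density_mul_exp_Ioi hθ',
    integral_exp_density_mul_exp_Ioi h, add_zero, div_self hθ.ne', ← div_self h.ne', ← sub_div]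
  ring_nf

end ExponentialLaplace

theorem div_add_div_eq_mul_div_mul_add (x θ a : ℝ) {b : ℝ} (hb : b ≠ 0) :
    x / (θ + a / b) = x * b / (θ * b + a) := by
  rw [add_div' _ _ _ hb, div_div_eq_mul_div]

section KiesMixture

variable {θ β t : ℝ}

theorem div_add_odds_rpow (x θ β : ℝ) (ht : t ∈ Ioo 0 1) :
    x / (θ + (t / (1 - t)) ^ β) = x * (1 - t) ^ β / (θ * (1 - t) ^ β + t ^ β) := by
  rw [div_rpow ht.1.le (sub_pos.2 ht.2).le,
    div_add_div_eq_mul_div_mul_add _ _ _ (rpow_pos_of_pos (sub_pos.2 ht.2) β).ne']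

theorem odds_rpow_div_add_odds_rpow (θ β : ℝ) (ht : t ∈ Ioo 0 1) :
    (t / (1 - t)) ^ β / (θ + (t / (1 - t)) ^ β) = t ^ β / (θ * (1 - t) ^ β + t ^ β) := by
  rw [div_add_odds_rpow _ _ _ ht, div_rpow ht.1.le (sub_pos.2 ht.2).le,
    div_mul_cancel₀ _ (rpow_pos_of_pos (sub_pos.2 ht.2) β).ne']

theorem hasDerivAt_rpow_div_mul_one_sub_rpow_add_rpow (ht : t ∈ Ioo 0 1)
    (hden : θ * (1 - t) ^ β + t ^ β ≠ 0) :
    HasDerivAt (fun s => s ^ β / (θ * (1 - s) ^ β + s ^ β))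
      (θ * β * t ^ (β - 1) * (1 - t) ^ (β - 1) / (θ * (1 - t) ^ β + t ^ β) ^ 2) t := by
  obtain ⟨ht0, ht1⟩ := ht
  have h1t : 0 < 1 - t := sub_pos.2 ht1
  have hnum : HasDerivAt (fun s => s ^ β) (β * t ^ (β - 1)) t :=
    hasDerivAt_rpow_const (Or.inl ht0.ne')
  have hsub : HasDerivAt (fun s => (1 - s) ^ β) ((0 - 1) * β * (1 - t) ^ (β - 1)) t :=
    ((hasDerivAt_const t 1).sub (hasDerivAt_id t)).rpow_const (Or.inl h1t.ne')
  refine (hnum.div ((hsub.const_mul θ).fun_add hnum) hden).congr_deriv ?_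
  have ht_pow : t ^ β = t ^ (β - 1) * t := by
    rw [← rpow_add_one ht0.ne', sub_add_cancel]
  have h1t_pow : (1 - t) ^ β = (1 - t) ^ (β - 1) * (1 - t) := by
    rw [← rpow_add_one h1t.ne', sub_add_cancel]
  rw [ht_pow, h1t_pow]
  ring

end KiesMixture

theorem exponential_kies_mixture_general
    (θ β : ℝ) (hθ : 0 < θ) (F : ℝ → ℝ)
    (hF : ∀ t, F t = ∫ x in Set.Ioi (0 : ℝ),
        θ * Real.exp (-θ * x) * (1 - Real.exp (-x * (t / (1 - t)) ^ β)))
    (t : ℝ) (ht : t ∈ Set.Ioo (0 : ℝ) 1) :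
    (∫ x in Set.Ioi (0 : ℝ), θ * Real.exp (-θ * x) * Real.exp (-x * (t / (1 - t)) ^ β))
        = θ * (1 - t) ^ β / (θ * (1 - t) ^ β + t ^ β) ∧
    F t = t ^ β / (θ * (1 - t) ^ β + t ^ β) ∧
    HasDerivAt F
      (θ * β * t ^ (β - 1) * (1 - t) ^ (β - 1) / (θ * (1 - t) ^ β + t ^ β) ^ 2) t := by
  have hrate : ∀ s ∈ Ioo (0 : ℝ) 1, 0 < θ + (s / (1 - s)) ^ β := fun s hs =>
    add_pos_of_pos_of_nonneg hθ (rpow_nonneg (div_nonneg hs.1.le (sub_pos.2 hs.2).le) β)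
  have hcdf : ∀ s ∈ Ioo (0 : ℝ) 1, F s = s ^ β / (θ * (1 - s) ^ β + s ^ β) := fun s hs => by
    rw [hF, integral_exp_density_mul_one_sub_exp_Ioi hθ (hrate s hs),
      odds_rpow_div_add_odds_rpow θ β hs]
  have hden : θ * (1 - t) ^ β + t ^ β ≠ 0 :=
    (add_pos (mul_pos hθ (rpow_pos_of_pos (sub_pos.2 ht.2) β)) (rpow_pos_of_pos ht.1 β)).ne'
  refine ⟨?_, hcdf t ht, ?_⟩
  · rw [integral_exp_density_mul_exp_Ioi (hrate t ht), div_add_odds_rpow θ θ β ht]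
  · exact (hasDerivAt_rpow_div_mul_one_sub_rpow_add_rpow ht hden).congr_of_eventuallyEq
      (Filter.eventuallyEq_of_mem (Ioo_mem_nhds ht.1 ht.2) hcdf)

theorem exponential_kies_mixture
    (θ β : ℝ) (hθ : 0 < θ) (hβ : 0 < β) (F : ℝ → ℝ)
    (hF : ∀ t, F t = ∫ x in Set.Ioi (0 : ℝ),
        θ * Real.exp (-θ * x) * (1 - Real.exp (-x * (t / (1 - t)) ^ β)))
    (t : ℝ) (ht : t ∈ Set.Ioo (0 : ℝ) 1) :
    (∫ x in Set.Ioi (0 : ℝ), θ * Real.exp (-θ * x) * Real.exp (-x * (t / (1 - t)) ^ β))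
        = θ * (1 - t) ^ β / (θ * (1 - t) ^ β + t ^ β) ∧
    F t = t ^ β / (θ * (1 - t) ^ β + t ^ β) ∧
    HasDerivAt F
      (θ * β * t ^ (β - 1) * (1 - t) ^ (β - 1) / (θ * (1 - t) ^ β + t ^ β) ^ 2) t :=
  exponential_kies_mixture_general θ β hθ F hF t ht
end

section
/- Let θ > 0 and β > 0, and let F(t) = t^β / (θ (1−t)^β + t^β) be the CDF of the exponential Kies mixture with intensity θ. Then the unique solution d ∈ (0,1) of the equation F(d) + d = 1 (the Hausdorff saturation) is d = θ^{1/(β+1)} / (θ^{1/(β+1)} + 1). -/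
theorem exponential_kies_mixture_saturation
    (θ β : ℝ) (hθ : 0 < θ) (hβ : 0 < β) (F : ℝ → ℝ)
    (hF : ∀ t, F t = t ^ β / (θ * (1 - t) ^ β + t ^ β)) :
    θ ^ (1 / (β + 1)) / (θ ^ (1 / (β + 1)) + 1) ∈ Set.Ioo (0 : ℝ) 1 ∧
    F (θ ^ (1 / (β + 1)) / (θ ^ (1 / (β + 1)) + 1)) +
        θ ^ (1 / (β + 1)) / (θ ^ (1 / (β + 1)) + 1) = 1 ∧
    ∀ d ∈ Set.Ioo (0 : ℝ) 1, F d + d = 1 →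
        d = θ ^ (1 / (β + 1)) / (θ ^ (1 / (β + 1)) + 1) := by
  have hb1 : β + 1 ≠ 0 := by positivity
  set s : ℝ := θ ^ (1 / (β + 1)) with hsdef
  have hs : 0 < s := Real.rpow_pos_of_pos hθ _
  have hs1 : (0 : ℝ) < s + 1 := by linarith
  have hspow : s ^ (β + 1) = θ := by
    rw [hsdef, ← Real.rpow_mul hθ.le, one_div, inv_mul_cancel₀ hb1, Real.rpow_one]
  -- key characterization
  have key : ∀ d : ℝ, 0 < d → d < 1 →
      (F d + d = 1 ↔ d ^ (β + 1) = θ * (1 - d) ^ (β + 1)) := by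
    intro d hd0 hd1
    have h1d : (0 : ℝ) < 1 - d := by linarith
    have hdb : (0 : ℝ) < d ^ β := Real.rpow_pos_of_pos hd0 _
    have h1db : (0 : ℝ) < (1 - d) ^ β := Real.rpow_pos_of_pos h1d _
    have hden : (0 : ℝ) < θ * (1 - d) ^ β + d ^ β := by positivity
    have hda : d ^ (β + 1) = d ^ β * d := by
      rw [Real.rpow_add hd0, Real.rpow_one]
    have h1da : (1 - d) ^ (β + 1) = (1 - d) ^ β * (1 - d) := by
      rw [Real.rpow_add h1d, Real.rpow_one]
    rw [hF, div_add' _ _ _ hden.ne', div_eq_one_iff_eq hden.ne', hda, h1da]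
    constructor
    · intro h; nlinarith
    · intro h; nlinarith
  have hd0 : 0 < s / (s + 1) := by positivity
  have hd1 : s / (s + 1) < 1 := by
    rw [div_lt_one hs1]; linarith
  have h1d : 1 - s / (s + 1) = 1 / (s + 1) := by field_simp; ring
  refine ⟨⟨hd0, hd1⟩, ?_, ?_⟩
  · rw [key _ hd0 hd1, h1d, Real.div_rpow hs.le hs1.le,
      Real.div_rpow zero_le_one hs1.le, Real.one_rpow, hspow, mul_one_div]
  · intro d hd hFd
    rw [key _ hd.1 hd.2] at hFd
    have h1d' : (0 : ℝ) < 1 - d := by linarith [hd.2]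
    have hratio : (d / (1 - d)) ^ (β + 1) = θ := by
      rw [Real.div_rpow hd.1.le h1d'.le, hFd, mul_div_assoc,
        div_self (Real.rpow_pos_of_pos h1d' _).ne', mul_one]
    have hds : d / (1 - d) = s := by
      have := congrArg (fun x : ℝ => x ^ (1 / (β + 1))) hratio
      simpa [← Real.rpow_natCast, ← Real.rpow_mul (div_nonneg hd.1.le h1d'.le),
        mul_inv_cancel₀ hb1, Real.rpow_one, hsdef, one_div] using this
    rw [div_eq_iff h1d'.ne'] at hds
    field_simp
    nlinarith
end

section
/- The standard uniform distribution on (0,1) is a Kies mixture with β = 1 and exponentially distributed λ with intensity 1: for every t ∈ (0,1), ∫_0^∞ e^{−x} (1 − exp(−x t/(1−t))) dx = t. -/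
open MeasureTheory

theorem uniform_is_exponential_kies_mixture
    (t : ℝ) (ht : t ∈ Set.Ioo (0 : ℝ) 1) :
    ∫ x in Set.Ioi (0 : ℝ), Real.exp (-x) * (1 - Real.exp (-x * t / (1 - t))) = t := by
  obtain ⟨ht0, ht1⟩ := ht
  have h1t : (0:ℝ) < 1 - t := by linarith
  set b : ℝ := (1 - t)⁻¹ with hb
  have hbpos : 0 < b := inv_pos.mpr h1t
  have hkey : ∀ x : ℝ, Real.exp (-x) * (1 - Real.exp (-x * t / (1 - t)))
      = Real.exp (-1 * x) - Real.exp (-b * x) := by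
    intro x
    have h2 : -x + -x * t / (1 - t) = -b * x := by
      rw [hb]; field_simp; ring
    rw [mul_sub, mul_one, ← Real.exp_add, h2, neg_one_mul]
  simp only [hkey]
  rw [integral_sub (exp_neg_integrableOn_Ioi 0 one_pos) (exp_neg_integrableOn_Ioi 0 hbpos)]
  have hI : ∀ c : ℝ, 0 < c → (∫ x in Set.Ioi (0:ℝ), Real.exp (-c * x)) = c⁻¹ := by
    intro c hc
    have := integral_comp_mul_left_Ioi (fun x => Real.exp (-x)) 0 hc
    simp only [mul_zero, neg_mul, smul_eq_mul] at this ⊢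
    rw [this, integral_exp_neg_Ioi_zero, mul_one]
  rw [hI 1 one_pos, hI b hbpos, hb, inv_inv, inv_one]
  ring
end
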